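/- Let M be an ε-straight R-module with filtration {F_j} as above. The extension class of 0 → F_{j-1} → F_j → F_j/F_{j-1} → 0 in *Ext^1_R(F_j/F_{j-1}, F_{j-1}) maps injectively under the natural map to *Ext^1_R(F_j/F_{j-1}, F_{j-1}/F_{j-2}); i.e., the natural map *Ext^1_R(F_j/F_{j-1}, F_{j-1}) → *Ext^1_R(F_j/F_{j-1}, F_{j-1}/F_{j-2}) is injective for all j ≥ 2. -/

import Mathlib

open MvPolynomial

/-- `a ∈ Ω = {-1,0}^n`. -/
def isOm {n : ℕ} (a : Fin n → ℤ) : Prop := ∀ i, a i = 0 ∨ a i = -1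

/-- The face prime ideal `p_a = (xᵢ : a i = -1)`. -/
noncomputable def faceIdeal {n : ℕ} (k : Type*) [CommSemiring k] (a : Fin n → ℤ) :
    Ideal (MvPolynomial (Fin n) k) :=
  Ideal.span (MvPolynomial.X '' {i | a i = -1})

/-- `|a|`, the number of `-1` entries of `a ∈ Ω`. -/
def wt {n : ℕ} (a : Fin n → ℤ) : ℕ := (Finset.univ.filter fun i => a i = -1).card

/-- The local cohomology module `H^r_I(R)` for `R = k[x₁,…,xₙ]`, as a type. -/
abbrev LC {n : ℕ} (k : Type) [Field k] (I : Ideal (MvPolynomial (Fin n) k)) (r : ℕ) : Type :=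
  ((localCohomology I r).obj
    (ModuleCat.of (MvPolynomial (Fin n) k) (MvPolynomial (Fin n) k)))

/-- A family of `k`-subspaces indexed by `ℤⁿ` is a compatible `ℤⁿ`-grading of an
`R = k[x₁,…,xₙ]`-module when multiplication by `xᵢ` raises degrees by `eᵢ`. -/
def GradingCompat {n : ℕ} (k : Type) [Field k] (M : Type*) [AddCommGroup M]
    [Module (MvPolynomial (Fin n) k) M] [Module k M]
    (g : (Fin n → ℤ) → Submodule k M) : Prop :=
  ∀ (i : Fin n) (d : Fin n → ℤ), ∀ m ∈ g d,
    (MvPolynomial.X i : MvPolynomial (Fin n) k) • m ∈ g (d + Pi.single i 1)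

/-- `g` is the grading of an `ε`-straight module structure (internal, compatible, finite
dimensional pieces, with multiplication `x^b : M_d → M_{d+b}` bijective whenever
`d i < 0 → d i + b i < 0` for all `i`). -/
def IsEpsStraight {n : ℕ} (k : Type) [Field k] (M : Type*) [AddCommGroup M]
    [Module (MvPolynomial (Fin n) k) M] [Module k M]
    (g : (Fin n → ℤ) → Submodule k M) : Prop :=
  DirectSum.IsInternal g ∧ GradingCompat k M g ∧
  (∀ d : Fin n → ℤ, Module.Finite k ↥(g d)) ∧
  ∀ (b : Fin n → ℕ) (d : Fin n → ℤ), (∀ i, d i < 0 → d i + (b i : ℤ) < 0) →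
    (∀ y ∈ g d, ((∏ i, MvPolynomial.X i ^ b i : MvPolynomial (Fin n) k)) • y = 0 → y = 0) ∧
    (∀ z ∈ g (d + fun i => (b i : ℤ)),
      ∃ y ∈ g d, ((∏ i, MvPolynomial.X i ^ b i : MvPolynomial (Fin n) k)) • y = z)

/-- The Hilbert function of the canonical `ℤⁿ`-grading of `H^{|a|}_{p_a}(R)`: the degree-`d`
piece is one-dimensional when `dᵢ < 0` exactly for the `i` with `a i = -1`, and `0`
otherwise. -/
def HilbH {n : ℕ} (k : Type) [Field k] (M : Type*) [AddCommGroup M] [Module k M]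
    (a : Fin n → ℤ) (g : (Fin n → ℤ) → Submodule k M) : Prop :=
  ∀ d : Fin n → ℤ, Module.finrank k (g d) =
    if (∀ i, (a i = -1 → d i < 0) ∧ (a i = 0 → 0 ≤ d i)) then 1 else 0

/-- The sign vector of `d ∈ ℤⁿ`: the element of `{-1,0}ⁿ` recording where `d` is negative. -/
def sgnv {n : ℕ} (d : Fin n → ℤ) : Fin n → ℤ := fun i => if d i < 0 then -1 else 0

/-! The retraction `E → F_{j-1}` is built degree by degree. Since `F_j/F_{j-1}` lives in the
degrees of weight `|sgnv d| = j`, every other piece `E_d` lies in `F_{j-1}`, where the retraction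
is the identity; on the pieces of weight `j` it is zero, as it must be, because `F_{j-1}` vanishes
in weights `≥ j`. Such a `k`-linear map is `R`-linear once every `x_i` kills the homogeneous
elements whose degree crosses between the two kinds of degrees. Multiplication by `x_i` lowers the
weight by at most one, so there are two crossings: out of weight `j + 1`, where `E_d ⊆ F_{j-1}` is
zero, and from weight `j` into weight `j - 1`. In the latter case `x_i e ∈ F_{j-1}` maps to
`x_i h(e) = 0` in `F_{j-1}/F_{j-2}`, `h` being the given extension of the projection, so `x_i e`
lies in `F_{j-2}`, which vanishes in weight `j - 1`. -/

section GradedPieces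

variable {ι k : Type*} [Ring k]

theorem exists_mem_map_eq_of_map_mem {A B : Type*} [AddCommGroup A] [AddCommGroup B]
    [Module k A] [Module k B] {gA : ι → Submodule k A} {gB : ι → Submodule k B}
    (hA : ⨆ d, gA d = ⊤) (hB : iSupIndep gB) (f : A →ₗ[k] B)
    (hf : ∀ d, ∀ a ∈ gA d, f a ∈ gB d) {d : ι} {a : A} (ha : f a ∈ gB d) :
    ∃ a' ∈ gA d, f a' = f a := by
  have hsplit : ∀ x, ∃ x' ∈ gA d, f x - f x' ∈ ⨆ (d') (_ : d' ≠ d), gB d' := fun x => by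
    induction (hA ▸ Submodule.mem_top : x ∈ ⨆ d, gA d) using Submodule.iSup_induction' with
    | mem d' x hx =>
      by_cases h : d' = d
      · subst h
        exact ⟨x, hx, by simp⟩
      · exact ⟨0, zero_mem _, by
          simpa using Submodule.mem_iSup_of_mem d' (Submodule.mem_iSup_of_mem h (hf d' x hx))⟩
    | zero => exact ⟨0, zero_mem _, by simp⟩
    | add x y _ _ hx hy =>
      obtain ⟨x', hx', hx⟩ := hx
      obtain ⟨y', hy', hy⟩ := hy
      refine ⟨x' + y', add_mem hx' hy', ?_⟩
      convert add_mem hx hy using 1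
      simp only [map_add]
      abel
  obtain ⟨a', ha', hrest⟩ := hsplit a
  exact ⟨a', ha', (sub_eq_zero.1 <|
    Submodule.disjoint_def.1 (hB d) _ (sub_mem ha (hf d a' ha')) hrest).symm⟩

theorem le_map_of_surjective {A B : Type*} [AddCommGroup A] [AddCommGroup B]
    [Module k A] [Module k B] {gA : ι → Submodule k A} {gB : ι → Submodule k B}
    (hA : ⨆ d, gA d = ⊤) (hB : iSupIndep gB) {f : A →ₗ[k] B} (hsurj : Function.Surjective f)
    (hf : ∀ d, ∀ a ∈ gA d, f a ∈ gB d) (d : ι) : gB d ≤ (gA d).map f := by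
  intro b hb
  obtain ⟨a, rfl⟩ := hsurj b
  exact exists_mem_map_eq_of_map_mem hA hB f hf hb

theorem DirectSum.IsInternal.exists_linearMap_eq [DecidableEq ι] {E N : Type*}
    [AddCommMonoid E] [AddCommMonoid N] [Module k E] [Module k N] {gE : ι → Submodule k E}
    (h : DirectSum.IsInternal gE) (φ : ∀ d, gE d →ₗ[k] N) :
    ∃ f : E →ₗ[k] N, ∀ d, ∀ (x : E) (hx : x ∈ gE d), f x = φ d ⟨x, hx⟩ := by
  let e : (DirectSum ι fun d => gE d) ≃ₗ[k] E :=
    LinearEquiv.ofBijective (DirectSum.coeLinearMap gE) h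
  refine ⟨DirectSum.toModule k ι N φ ∘ₗ e.symm.toLinearMap, fun d x hx => ?_⟩
  have hcomp : e.symm x = DirectSum.lof k ι (fun d => gE d) d ⟨x, hx⟩ := by
    rw [LinearEquiv.symm_apply_eq]
    exact (DirectSum.coeLinearMap_lof gE d ⟨x, hx⟩).symm
  simp [hcomp]

theorem Submodule.iSup_comap_subtype_eq_top {M : Type*} [AddCommMonoid M] [Module k M]
    {g : ι → Submodule k M} {P : Submodule k M} (h : P = ⨆ d, g d ⊓ P) :
    ⨆ d, (g d).comap P.subtype = ⊤ := by
  apply Submodule.map_injective_of_injective P.injective_subtype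
  simp only [Submodule.map_iSup, Submodule.map_comap_subtype, Submodule.map_top,
    Submodule.range_subtype]
  rw [iSup_congr fun d => inf_comm P (g d), ← h]

end GradedPieces

theorem eq_bot_of_finrank_eq_zero_of_surjective {ι K A B : Type*} [DivisionRing K]
    [AddCommGroup A] [AddCommGroup B] [Module K A] [Module K B]
    {gA : ι → Submodule K A} {gB : ι → Submodule K B}
    (hA : ⨆ d, gA d = ⊤) (hB : iSupIndep gB) {f : A →ₗ[K] B} (hsurj : Function.Surjective f)
    (hf : ∀ d, ∀ a ∈ gA d, f a ∈ gB d) {d : ι} [Module.Finite K (gA d)]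
    (h : Module.finrank K (gB d) = 0) : gB d = ⊥ :=
  have := Submodule.finiteDimensional_of_le (le_map_of_surjective hA hB hsurj hf d)
  Submodule.finrank_eq_zero.1 h

theorem MvPolynomial.map_smul_of_map_X_smul {σ ι k E N : Type*} [CommSemiring k]
    [AddCommMonoid E] [Module (MvPolynomial σ k) E] [Module k E]
    [IsScalarTower k (MvPolynomial σ k) E] [AddCommMonoid N] [Module (MvPolynomial σ k) N]
    [Module k N] [IsScalarTower k (MvPolynomial σ k) N] {gE : ι → Submodule k E}
    (hE : ⨆ d, gE d = ⊤) (f : E →ₗ[k] N)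
    (hX : ∀ i d, ∀ e ∈ gE d,
      f ((X i : MvPolynomial σ k) • e) = (X i : MvPolynomial σ k) • f e)
    (p : MvPolynomial σ k) (e : E) : f (p • e) = p • f e := by
  have hX' : ∀ i e, f ((X i : MvPolynomial σ k) • e) = (X i : MvPolynomial σ k) • f e := by
    intro i e
    induction (hE ▸ Submodule.mem_top : e ∈ ⨆ d, gE d) using Submodule.iSup_induction' with
    | mem d x hx => exact hX i d x hx
    | zero => simp
    | add x y _ _ hx hy => simp only [smul_add, map_add, hx, hy]
  induction p using MvPolynomial.induction_on generalizing e with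
  | C a => rw [← MvPolynomial.algebraMap_eq, algebraMap_smul, algebraMap_smul, map_smul]
  | add p q hp hq => rw [add_smul, add_smul, map_add, hp, hq]
  | mul_X p i hp => rw [mul_smul, mul_smul, hp, hX']

section GradedSplitting

variable {n : ℕ} {k : Type} [Field k] {E N : Type*}
  [AddCommGroup E] [Module (MvPolynomial (Fin n) k) E] [Module k E]
  [IsScalarTower k (MvPolynomial (Fin n) k) E]
  [AddCommGroup N] [Module (MvPolynomial (Fin n) k) N] [Module k N]

theorem exists_graded_projection {gE : (Fin n → ℤ) → Submodule k E}
    (hE : DirectSum.IsInternal gE) (hEX : GradingCompat k E gE) (S : Set (Fin n → ℤ))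
    (hcross : ∀ i d, ∀ e ∈ gE d, Xor (d ∈ S) (d + Pi.single i 1 ∈ S) →
      (X i : MvPolynomial (Fin n) k) • e = 0) :
    ∃ P : E →ₗ[MvPolynomial (Fin n) k] E,
      (∀ d ∈ S, ∀ e ∈ gE d, P e = e) ∧ ∀ d ∉ S, ∀ e ∈ gE d, P e = 0 := by
  classical
  obtain ⟨P, hP⟩ := hE.exists_linearMap_eq fun d => if d ∈ S then (gE d).subtype else 0
  have hPd : ∀ d, ∀ e ∈ gE d, P e = if d ∈ S then e else 0 := fun d e he => by
    rw [hP d e he]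
    split_ifs <;> rfl
  have hPX : ∀ i d, ∀ e ∈ gE d,
      P ((X i : MvPolynomial (Fin n) k) • e) = (X i : MvPolynomial (Fin n) k) • P e := by
    intro i d e he
    rw [hPd d e he, hPd _ _ (hEX i d e he)]
    by_cases hd : d ∈ S <;> by_cases hd' : d + Pi.single i 1 ∈ S
    · rw [if_pos hd, if_pos hd']
    · rw [if_pos hd, if_neg hd', hcross i d e he (Or.inl ⟨hd, hd'⟩)]
    · rw [if_neg hd, if_pos hd', hcross i d e he (Or.inr ⟨hd', hd⟩), smul_zero]
    · rw [if_neg hd, if_neg hd', smul_zero]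
  refine ⟨{ P with map_smul' := map_smul_of_map_X_smul hE.submodule_iSup_eq_top P hPX },
    fun d hd e he => ?_, fun d hd e he => ?_⟩ <;> simp [hPd d e he, hd]

theorem exists_graded_retraction {gE : (Fin n → ℤ) → Submodule k E}
    (hE : DirectSum.IsInternal gE) (hEX : GradingCompat k E gE)
    {gN : (Fin n → ℤ) → Submodule k N} (hN : ⨆ d, gN d = ⊤)
    (ι : N →ₗ[MvPolynomial (Fin n) k] E) (hι : Function.Injective ι)
    (hιgr : ∀ d, ∀ y ∈ gN d, ι y ∈ gE d) (S : Set (Fin n → ℤ))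
    (hS : ∀ d ∈ S, ∀ e ∈ gE d, ∃ y ∈ gN d, ι y = e) (hSc : ∀ d ∉ S, gN d = ⊥)
    (hcross : ∀ i d, ∀ e ∈ gE d, Xor (d ∈ S) (d + Pi.single i 1 ∈ S) →
      (X i : MvPolynomial (Fin n) k) • e = 0) :
    ∃ ρ : E →ₗ[MvPolynomial (Fin n) k] N,
      ρ ∘ₗ ι = LinearMap.id ∧ ∀ d, ∀ e ∈ gE d, ρ e ∈ gN d := by
  obtain ⟨P, hP⟩ := exists_graded_projection hE hEX S hcross
  have hPι : LinearMap.range P ≤ LinearMap.range ι := by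
    rintro _ ⟨e, rfl⟩
    induction (hE.submodule_iSup_eq_top ▸ Submodule.mem_top : e ∈ ⨆ d, gE d)
      using Submodule.iSup_induction' with
    | mem d e he =>
      by_cases hd : d ∈ S
      · obtain ⟨y, -, rfl⟩ := hS d hd e he
        exact ⟨y, (hP.1 d hd _ he).symm⟩
      · simp [hP.2 d hd e he]
    | zero => simp
    | add x y _ _ hx hy => simpa using add_mem hx hy
  let ρ : E →ₗ[MvPolynomial (Fin n) k] N :=
    (LinearEquiv.ofInjective ι hι).symm.toLinearMap ∘ₗ
      P.codRestrict (LinearMap.range ι) fun e => hPι ⟨e, rfl⟩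
  have hιρ : ∀ e, ι (ρ e) = P e := fun e =>
    LinearEquiv.ofInjective_symm_apply (f := ι) (h := hι) (P.codRestrict _ _ e)
  refine ⟨ρ, LinearMap.ext fun y => hι ?_, fun d e he => ?_⟩
  · rw [LinearMap.comp_apply, LinearMap.id_apply, hιρ]
    induction (hN ▸ Submodule.mem_top : y ∈ ⨆ d, gN d) using Submodule.iSup_induction' with
    | mem d y hy =>
      by_cases hd : d ∈ S
      · exact hP.1 d hd _ (hιgr d y hy)
      · simp [(Submodule.eq_bot_iff _).1 (hSc d hd) y hy]
    | zero => simp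
    | add x y _ _ hx hy => simp [hx, hy]
  · by_cases hd : d ∈ S
    · obtain ⟨y, hy, rfl⟩ := hS d hd e he
      rwa [hι (by rw [hιρ, hP.1 d hd _ he] : ι (ρ (ι y)) = ι y)]
    · rw [hι (by rw [hιρ, hP.2 d hd e he, map_zero] : ι (ρ e) = ι 0)]
      exact zero_mem _

end GradedSplitting

theorem eq_zero_of_mem_filtration_of_lt {R k M D : Type*} [Semiring R] [Semiring k]
    [AddCommMonoid M] [Module R M] [Module k M] {Q : ℕ → Type*} [∀ j, AddCommMonoid (Q j)]
    [∀ j, Module R (Q j)] [∀ j, Module k (Q j)] (w : D → ℕ) (g : D → Submodule k M)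
    (F : ℕ → Submodule R M) (hF0 : F 0 = ⊥) (π : ∀ j, F j →ₗ[R] Q j)
    (hπker : ∀ j, LinearMap.ker (π j) = (F (j - 1)).comap (F j).subtype)
    (gQ : ∀ j, D → Submodule k (Q j))
    (hπgr : ∀ j d (x : M) (hx : x ∈ F j), x ∈ g d → π j ⟨x, hx⟩ ∈ gQ j d)
    (hQ : ∀ j d, w d ≠ j → gQ j d = ⊥) {l : ℕ} {d : D} {x : M} (hl : l < w d)
    (hxg : x ∈ g d) (hxF : x ∈ F l) : x = 0 := by
  induction l generalizing x with
  | zero => simpa [hF0] using hxF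
  | succ l ih =>
    have hπx : π (l + 1) ⟨x, hxF⟩ = 0 := by
      simpa [hQ (l + 1) d hl.ne'] using hπgr (l + 1) d x hxF hxg
    have hxl : x ∈ F l := by
      simpa [hπker] using LinearMap.mem_ker.2 hπx
    exact ih (by omega) hxg hxl

theorem wt_sgnv_eq_card {n : ℕ} (d : Fin n → ℤ) :
    wt (sgnv d) = (Finset.univ.filter fun l => d l < 0).card := by
  unfold wt sgnv
  congr 1
  exact Finset.filter_congr fun l _ => by split_ifs <;> simp_all

theorem wt_sgnv_add_single_le {n : ℕ} (d : Fin n → ℤ) (i : Fin n) :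
    wt (sgnv (d + Pi.single i 1)) ≤ wt (sgnv d) := by
  rw [wt_sgnv_eq_card, wt_sgnv_eq_card]
  refine Finset.card_le_card fun l => ?_
  simp only [Finset.mem_filter, Finset.mem_univ, true_and, Pi.add_apply]
  rcases eq_or_ne l i with rfl | h
  · simp only [Pi.single_eq_same]
    omega
  · simp [Pi.single_eq_of_ne h]

theorem wt_sgnv_le_wt_sgnv_add_single_add_one {n : ℕ} (d : Fin n → ℤ) (i : Fin n) :
    wt (sgnv d) ≤ wt (sgnv (d + Pi.single i 1)) + 1 := by
  rw [wt_sgnv_eq_card, wt_sgnv_eq_card]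
  refine (Finset.card_le_card fun l hl => ?_).trans (Finset.card_insert_le i _)
  rcases eq_or_ne l i with rfl | h
  · exact Finset.mem_insert_self _ _
  · simp_all

/-- The injectivity of `*Ext¹(F_j/F_{j-1}, F_{j-1}) → *Ext¹(F_j/F_{j-1}, F_{j-1}/F_{j-2})`,
stated for one extension class `0 → F_{j-1} → E → F_j/F_{j-1} → 0`: its image vanishes iff the
projection `F_{j-1} → F_{j-1}/F_{j-2}` extends to a graded map on `E`, and it is zero iff the
extension splits by a graded retraction. -/
theorem stmt_16_general (n : ℕ) (k : Type) [Field k] (M : Type) [AddCommGroup M]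
    [Module (MvPolynomial (Fin n) k) M] [Module k M]
    [IsScalarTower k (MvPolynomial (Fin n) k) M]
    -- `M` is `ε`-straight, with grading `g`
    (g : (Fin n → ℤ) → Submodule k M) (hg : IsEpsStraight k M g)
    -- the canonical filtration of Proposition 3.1, with graded quotients `Q j = F_j/F_{j-1}`
    (F : ℕ → Submodule (MvPolynomial (Fin n) k) M)
    (hF0 : F 0 = ⊥)
    (hFgr : ∀ j : ℕ, (F j).restrictScalars k = ⨆ d : Fin n → ℤ, (g d ⊓ (F j).restrictScalars k))
    (Q : ℕ → Type) [∀ j, AddCommGroup (Q j)] [∀ j, Module (MvPolynomial (Fin n) k) (Q j)]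
    [∀ j, Module k (Q j)] [∀ j, IsScalarTower k (MvPolynomial (Fin n) k) (Q j)]
    (π : ∀ j : ℕ, ↥(F j) →ₗ[MvPolynomial (Fin n) k] Q j)
    (hπsurj : ∀ j, Function.Surjective (π j))
    (hπker : ∀ j, LinearMap.ker (π j) = Submodule.comap (F j).subtype (F (j - 1)))
    (gQ : ∀ j : ℕ, (Fin n → ℤ) → Submodule k (Q j))
    (hgQ : ∀ j, DirectSum.IsInternal (gQ j) ∧ GradingCompat k (Q j) (gQ j))
    (hπgr : ∀ (j : ℕ) (d : Fin n → ℤ) (x : M) (hx : x ∈ F j), x ∈ g d → π j ⟨x, hx⟩ ∈ gQ j d)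
    -- the quotients have the Hilbert functions of `⊕_{|a| = j} H^j_{p_a}(R)^{⊕ m_a}`
    (hQdim : ∀ (j : ℕ) (d : Fin n → ℤ),
      Module.finrank k (gQ j d) =
        if wt (sgnv d) = j then Module.finrank k (g (sgnv d)) else 0)
    -- a degree `2 ≤ j ≤ n`
    (j : ℕ) (hj2 : 2 ≤ j)
    -- a graded extension `0 → F_{j-1} → E → F_j/F_{j-1} → 0`
    (E : Type) [AddCommGroup E] [Module (MvPolynomial (Fin n) k) E] [Module k E]
    [IsScalarTower k (MvPolynomial (Fin n) k) E]
    (gE : (Fin n → ℤ) → Submodule k E)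
    (hgE : DirectSum.IsInternal gE ∧ GradingCompat k E gE)
    (ι : ↥(F (j - 1)) →ₗ[MvPolynomial (Fin n) k] E)
    (πE : E →ₗ[MvPolynomial (Fin n) k] Q j)
    (hι : Function.Injective ι)
    (hexact : LinearMap.range ι = LinearMap.ker πE)
    (hιgr : ∀ (d : Fin n → ℤ) (x : ↥(F (j - 1))), (x : M) ∈ g d → ι x ∈ gE d)
    (hπEgr : ∀ d : Fin n → ℤ, ∀ m ∈ gE d, πE m ∈ gQ j d)
    -- whose image in `*Ext¹(F_j/F_{j-1}, F_{j-1}/F_{j-2})` vanishes: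
    (hpush : ∃ hmap : E →ₗ[MvPolynomial (Fin n) k] Q (j - 1),
      (∀ d : Fin n → ℤ, ∀ m ∈ gE d, hmap m ∈ gQ (j - 1) d) ∧
      hmap.comp ι = π (j - 1)) :
    -- then the extension itself splits (by a graded retraction)
    ∃ ρ : E →ₗ[MvPolynomial (Fin n) k] ↥(F (j - 1)),
      ρ.comp ι = LinearMap.id ∧
      ∀ d : Fin n → ℤ, ∀ m ∈ gE d, ((ρ m : M) ∈ g d) := by
  obtain ⟨hmap, hmapgr, hmapι⟩ := hpush
  let gF : ∀ m, (Fin n → ℤ) → Submodule k (F m) := fun m d =>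
    (g d).comap ((F m).subtype.restrictScalars k)
  have hgF : ∀ m, ⨆ d, gF m d = ⊤ := fun m => Submodule.iSup_comap_subtype_eq_top (hFgr m)
  have hQbot : ∀ m d, wt (sgnv d) ≠ m → gQ m d = ⊥ := fun m d hne => by
    have := hg.2.2.1 d
    have : Module.Finite k (gF m d) := Module.Finite.of_injective
      (((F m).subtype.restrictScalars k).restrict (q := g d) fun x hx => hx)
      fun x y hxy => by ext; simpa using congrArg Subtype.val hxy
    exact eq_bot_of_finrank_eq_zero_of_surjective (hgF m) (hgQ m).1.submodule_iSupIndep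
      (f := (π m).restrictScalars k) (hπsurj m) (fun d x hx => hπgr m d x x.2 hx)
      (by rw [hQdim, if_neg hne])
  have hFvan : ∀ {l d} {x : M}, l < wt (sgnv d) → x ∈ g d → x ∈ F l → x = 0 :=
    eq_zero_of_mem_filtration_of_lt (wt ∘ sgnv) g F hF0 π hπker gQ hπgr hQbot
  have hlift : ∀ d, wt (sgnv d) ≠ j → ∀ e ∈ gE d, ∃ y ∈ gF (j - 1) d, ι y = e := by
    intro d hd e he
    obtain ⟨y, rfl⟩ : e ∈ LinearMap.range ι := by
      simpa [hexact, hQbot j d hd] using hπEgr d e he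
    exact exists_mem_map_eq_of_map_mem (hgF _) hgE.1.submodule_iSupIndep (ι.restrictScalars k)
      (fun d y hy => hιgr d y hy) he
  have hFj : ∀ d, wt (sgnv d) = j → gF (j - 1) d = ⊥ := fun d hd =>
    (Submodule.eq_bot_iff _).2 fun y hy => Subtype.ext (hFvan (by omega) hy y.2)
  have hcross : ∀ i d, ∀ e ∈ gE d,
      Xor (wt (sgnv d) ≠ j) (wt (sgnv (d + Pi.single i 1)) ≠ j) →
      (X i : MvPolynomial (Fin n) k) • e = 0 := by
    intro i d e he hxor
    have hle := wt_sgnv_add_single_le d i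
    have hge := wt_sgnv_le_wt_sgnv_add_single_add_one d i
    rcases hxor with ⟨hd, hd'⟩ | ⟨hd', hd⟩
    · obtain ⟨y, hy, rfl⟩ := hlift d hd e he
      rw [show y = 0 from Subtype.ext (hFvan (by omega) hy y.2), map_zero, smul_zero]
    · obtain ⟨z, hz, hzX⟩ := hlift _ hd' _ (hgE.2 i d e he)
      have hme : hmap e = 0 := by
        simpa [hQbot (j - 1) d (by omega)] using hmapgr d e he
      have hπz : π (j - 1) z = 0 := by
        rw [← hmapι, LinearMap.comp_apply, hzX, map_smul, hme, smul_zero]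
      have hzF : (z : M) ∈ F (j - 1 - 1) := by
        simpa [hπker] using LinearMap.mem_ker.2 hπz
      rw [← hzX, show z = 0 from Subtype.ext (hFvan (by omega) hz hzF), map_zero]
  exact exists_graded_retraction hgE.1 hgE.2 (hgF (j - 1)) ι hι (fun d y hy => hιgr d y hy)
    {d | wt (sgnv d) ≠ j} hlift (fun d hd => hFj d (not_not.1 hd)) hcross

/-- Injectivity of the natural map
`*Ext¹_R(F_j/F_{j-1}, F_{j-1}) → *Ext¹_R(F_j/F_{j-1}, F_{j-1}/F_{j-2})` for the canonical
filtration `{F_j}` of an `ε`-straight module `M` (`j ≥ 2`), expressed extension-wise: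
if the pushout of a graded extension `0 → F_{j-1} → E → F_j/F_{j-1} → 0` along
`F_{j-1} → F_{j-1}/F_{j-2}` splits (equivalently, the projection `F_{j-1} → F_{j-1}/F_{j-2}`
extends to a graded map `E → F_{j-1}/F_{j-2}`), then the extension itself splits by a graded
retraction. -/
theorem stmt_16 (n : ℕ) (k : Type) [Field k] (M : Type) [AddCommGroup M]
    [Module (MvPolynomial (Fin n) k) M] [Module k M]
    [IsScalarTower k (MvPolynomial (Fin n) k) M]
    -- `M` is `ε`-straight, with grading `g`
    (g : (Fin n → ℤ) → Submodule k M) (hg : IsEpsStraight k M g)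
    -- the canonical filtration of Proposition 3.1, with graded quotients `Q j = F_j/F_{j-1}`
    (F : ℕ → Submodule (MvPolynomial (Fin n) k) M)
    (hmono : Monotone F) (hF0 : F 0 = ⊥) (hFn : F n = ⊤)
    (hFgr : ∀ j : ℕ, (F j).restrictScalars k = ⨆ d : Fin n → ℤ, (g d ⊓ (F j).restrictScalars k))
    (Q : ℕ → Type) [∀ j, AddCommGroup (Q j)] [∀ j, Module (MvPolynomial (Fin n) k) (Q j)]
    [∀ j, Module k (Q j)] [∀ j, IsScalarTower k (MvPolynomial (Fin n) k) (Q j)]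
    (π : ∀ j : ℕ, ↥(F j) →ₗ[MvPolynomial (Fin n) k] Q j)
    (hπsurj : ∀ j, Function.Surjective (π j))
    (hπker : ∀ j, LinearMap.ker (π j) = Submodule.comap (F j).subtype (F (j - 1)))
    (gQ : ∀ j : ℕ, (Fin n → ℤ) → Submodule k (Q j))
    (hgQ : ∀ j, DirectSum.IsInternal (gQ j) ∧ GradingCompat k (Q j) (gQ j))
    (hπgr : ∀ (j : ℕ) (d : Fin n → ℤ) (x : M) (hx : x ∈ F j), x ∈ g d → π j ⟨x, hx⟩ ∈ gQ j d)
    -- the quotients have the Hilbert functions of `⊕_{|a| = j} H^j_{p_a}(R)^{⊕ m_a}`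
    (hQdim : ∀ (j : ℕ) (d : Fin n → ℤ),
      Module.finrank k (gQ j d) =
        if wt (sgnv d) = j then Module.finrank k (g (sgnv d)) else 0)
    -- a degree `2 ≤ j ≤ n`
    (j : ℕ) (hj2 : 2 ≤ j) (hjn : j ≤ n)
    -- a graded extension `0 → F_{j-1} → E → F_j/F_{j-1} → 0`
    (E : Type) [AddCommGroup E] [Module (MvPolynomial (Fin n) k) E] [Module k E]
    [IsScalarTower k (MvPolynomial (Fin n) k) E]
    (gE : (Fin n → ℤ) → Submodule k E)
    (hgE : DirectSum.IsInternal gE ∧ GradingCompat k E gE)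
    (ι : ↥(F (j - 1)) →ₗ[MvPolynomial (Fin n) k] E)
    (πE : E →ₗ[MvPolynomial (Fin n) k] Q j)
    (hι : Function.Injective ι) (hπE : Function.Surjective πE)
    (hexact : LinearMap.range ι = LinearMap.ker πE)
    (hιgr : ∀ (d : Fin n → ℤ) (x : ↥(F (j - 1))), (x : M) ∈ g d → ι x ∈ gE d)
    (hπEgr : ∀ d : Fin n → ℤ, ∀ m ∈ gE d, πE m ∈ gQ j d)
    -- whose image in `*Ext¹(F_j/F_{j-1}, F_{j-1}/F_{j-2})` vanishes:
    (hpush : ∃ hmap : E →ₗ[MvPolynomial (Fin n) k] Q (j - 1),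
      (∀ d : Fin n → ℤ, ∀ m ∈ gE d, hmap m ∈ gQ (j - 1) d) ∧
      hmap.comp ι = π (j - 1)) :
    -- then the extension itself splits (by a graded retraction)
    ∃ ρ : E →ₗ[MvPolynomial (Fin n) k] ↥(F (j - 1)),
      ρ.comp ι = LinearMap.id ∧
      ∀ d : Fin n → ℤ, ∀ m ∈ gE d, ((ρ m : M) ∈ g d) :=
  stmt_16_general n k M g hg F hF0 hFgr Q π hπsurj hπker gQ hgQ hπgr hQdim j hj2 E gE hgE ι πE hι
    hexact hιgr hπEgr hpush
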